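/- arXiv:1109.1945 — 6 statements merged into one kernel-verified Lean document; each statement's English description precedes it below -/
import Mathlib

section
/- Let S be a finite totally ordered set, R a commutative ring with 1, q ∈ R, and A = R⟨t_s : s ∈ S⟩ the free associative algebra. For J ⊆ S define τ⁻_J = Σ_{I⊆J, #I odd} (-1)^{ℓ_J(I)} (-q)^{(#I-1)/2} t_{J∖I} and τ⁺_J = Σ_{I⊆J, #I even} (-1)^{ℓ_J(I)} (-q)^{#I/2} t_{J∖I}, where t_K denotes the ordered monomial over K and ℓ_J(I) = Σ_ν (α_ν − ν) for I = {j_{α_1} < ⋯ < j_{α_{#I}}}. Then for J = J' ∪ J'' with every element of J' less than every element of J'', the identity τ⁺_J = τ⁺_{J'} τ⁺_{J''} + (−1)^{#J'} q τ⁻_{J'} τ⁻_{J''} holds in A. -/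
/-- The ordered monomial `t_J = t_{j_1} ⋯ t_{j_{#J}}` in the free algebra. -/
noncomputable def tMon (R : Type*) [CommRing R] {S : Type*} [LinearOrder S] (J : Finset S) :
    FreeAlgebra R S :=
  ((J.sort (· ≤ ·)).map (FreeAlgebra.ι R)).prod

/-- `ℓ_J(I) = Σ_ν (α_ν - ν) = Σ_{i ∈ I} #{j ∈ J \ I : j < i}`. -/
def ellJ {S : Type*} [LinearOrder S] (J I : Finset S) : ℕ :=
  ∑ i ∈ I, ((J \ I).filter (· < i)).card

/-- `τ⁻_J = Σ_{I ⊆ J, #I odd} (-1)^{ℓ_J(I)} (-q)^{(#I-1)/2} t_{J∖I}`. -/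
noncomputable def tauMinus (R : Type*) [CommRing R] {S : Type*} [LinearOrder S] (q : R)
    (J : Finset S) : FreeAlgebra R S :=
  ∑ I ∈ J.powerset.filter fun I => ¬ 2 ∣ I.card,
    ((-1 : R) ^ ellJ J I * (-q) ^ ((I.card - 1) / 2)) • tMon R (J \ I)

/-- `τ⁺_J = Σ_{I ⊆ J, #I even} (-1)^{ℓ_J(I)} (-q)^{#I/2} t_{J∖I}`. -/
noncomputable def tauPlus (R : Type*) [CommRing R] {S : Type*} [LinearOrder S] (q : R)
    (J : Finset S) : FreeAlgebra R S :=
  ∑ I ∈ J.powerset.filter fun I => 2 ∣ I.card,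
    ((-1 : R) ^ ellJ J I * (-q) ^ (I.card / 2)) • tMon R (J \ I)

/-!
Split each `I ⊆ J' ∪ J''` as `I' ∪ I''` with `I' ⊆ J'`, `I'' ⊆ J''`. Then
`t_{J∖I} = t_{J'∖I'} t_{J''∖I''}` and `ℓ_J(I) = ℓ_{J'}(I') + ℓ_{J''}(I'') + #I'' · #(J'∖I')`,
since every element of `I''` is preceded by all of `J'∖I'`. `#I` is even exactly when `#I'` and
`#I''` have the same parity. Even–even pairs reproduce `τ⁺_{J'} τ⁺_{J''}`; for odd–odd pairs the
extra sign `(-1)^{#(J'∖I')} = -(-1)^{#J'}` and the extra factor `-q` in `(-q)^{#I/2}` combine to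
`(-1)^{#J'} q`, giving the `τ⁻_{J'} τ⁻_{J''}` term.
-/

open Finset

section
variable {S : Type*} [LinearOrder S] {A B : Finset S}

lemma Finset.disjoint_of_forall_lt (h : ∀ a ∈ A, ∀ b ∈ B, a < b) : Disjoint A B :=
  disjoint_left.2 fun a ha hb => (h a ha a hb).false

lemma Finset.sort_union_of_forall_lt (h : ∀ a ∈ A, ∀ b ∈ B, a < b) :
    (A ∪ B).sort (· ≤ ·) = A.sort (· ≤ ·) ++ B.sort (· ≤ ·) := by
  refine List.Perm.eq_of_pairwise' (pairwise_sort _ _) ?_ ?_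
  · exact List.pairwise_append.2 ⟨pairwise_sort _ _, pairwise_sort _ _,
      fun a ha b hb => (h a ((mem_sort _).1 ha) b ((mem_sort _).1 hb)).le⟩
  · rw [← Multiset.coe_eq_coe, ← Multiset.coe_add, sort_eq, sort_eq, sort_eq,
      ← disjUnion_eq_union _ _ (disjoint_of_forall_lt h)]
    rfl

end

lemma Finset.union_sdiff_union_of_disjoint {α : Type*} [DecidableEq α] {A B I J : Finset α}
    (hAB : Disjoint A B) (hI : I ⊆ A) (hJ : J ⊆ B) : (A ∪ B) \ (I ∪ J) = A \ I ∪ B \ J := by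
  ext x
  have := disjoint_left.1 hAB
  simp only [mem_union, mem_sdiff]
  grind

lemma Finset.sum_powerset_union {α M : Type*} [DecidableEq α] [AddCommMonoid M]
    {A B : Finset α} (h : Disjoint A B) (f : Finset α → M) :
    ∑ I ∈ (A ∪ B).powerset, f I = ∑ I ∈ A.powerset, ∑ J ∈ B.powerset, f (I ∪ J) := by
  have hAB := disjoint_left.1 h
  have inter_left : ∀ {I J}, I ⊆ A → J ⊆ B → (I ∪ J) ∩ A = I := fun hI hJ => by
    ext x; simp only [mem_inter, mem_union]; grind
  have inter_right : ∀ {I J}, I ⊆ A → J ⊆ B → (I ∪ J) ∩ B = J := fun hI hJ => by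
    ext x; simp only [mem_inter, mem_union]; grind
  rw [powerset_union, ← image_sup_product, sum_image, sum_product]
  · rfl
  rintro ⟨I, J⟩ hIJ ⟨I', J'⟩ hIJ' heq
  simp only [coe_product, Set.mem_prod, mem_coe, mem_powerset] at hIJ hIJ'
  simp only [Function.uncurry_apply_pair, sup_eq_union] at heq
  exact Prod.ext
    ((inter_left hIJ.1 hIJ.2).symm.trans ((congrArg (· ∩ A) heq).trans (inter_left hIJ'.1 hIJ'.2)))
    ((inter_right hIJ.1 hIJ.2).symm.trans
      ((congrArg (· ∩ B) heq).trans (inter_right hIJ'.1 hIJ'.2)))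

section
variable (R : Type*) [CommRing R] {S : Type*} [LinearOrder S]

lemma tMon_union_of_forall_lt {A B : Finset S} (h : ∀ a ∈ A, ∀ b ∈ B, a < b) :
    tMon R (A ∪ B) = tMon R A * tMon R B := by
  rw [tMon, sort_union_of_forall_lt h, List.map_append, List.prod_append, tMon, tMon]

noncomputable def tauTerm (q : R) (J I : Finset S) : FreeAlgebra R S :=
  ((-1 : R) ^ ellJ J I * (-q) ^ (#I / 2)) • tMon R (J \ I)

variable {R} (q : R)

lemma tauPlus_eq_sum (J : Finset S) :
    tauPlus R q J = ∑ I ∈ J.powerset, if 2 ∣ #I then tauTerm R q J I else 0 := by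
  rw [tauPlus, sum_filter]
  rfl

-- For odd `#I` the exponent `(#I - 1) / 2` of `τ⁻` equals `#I / 2`.
lemma tauMinus_eq_sum (J : Finset S) :
    tauMinus R q J = ∑ I ∈ J.powerset, if 2 ∣ #I then 0 else tauTerm R q J I := by
  rw [tauMinus, sum_filter]
  refine sum_congr rfl fun I _ => ?_
  by_cases h : 2 ∣ #I
  · simp only [h, not_true_eq_false, if_false, if_true]
  · have : (#I - 1) / 2 = #I / 2 := by omega
    simp only [h, not_false_eq_true, if_false, if_true, this, tauTerm]

lemma tauTerm_mul_tauTerm (J' J'' I' I'' : Finset S) :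
    tauTerm R q J' I' * tauTerm R q J'' I''
      = ((-1 : R) ^ (ellJ J' I' + ellJ J'' I'') * (-q) ^ (#I' / 2 + #I'' / 2)) •
        (tMon R (J' \ I') * tMon R (J'' \ I'')) := by
  rw [tauTerm, tauTerm, smul_mul_smul_comm, pow_add, pow_add]
  congr 1
  ring

end

section
variable {R : Type*} [CommRing R] (q : R) {S : Type*} [LinearOrder S] {J' J'' I' I'' : Finset S}
  (hlt : ∀ a ∈ J', ∀ b ∈ J'', a < b) (hI' : I' ⊆ J') (hI'' : I'' ⊆ J'')
include hlt hI' hI''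

lemma ellJ_union :
    ellJ (J' ∪ J'') (I' ∪ I'') = ellJ J' I' + ellJ J'' I'' + #I'' * #(J' \ I') := by
  have hd : Disjoint J' J'' := disjoint_of_forall_lt hlt
  have hdI : Disjoint I' I'' := disjoint_of_forall_lt fun a ha b hb => hlt a (hI' ha) b (hI'' hb)
  have hdD : Disjoint (J' \ I') (J'' \ I'') := hd.mono sdiff_subset sdiff_subset
  have below_left : ∀ i ∈ I', (J'' \ I'').filter (· < i) = ∅ := fun i hi =>
    filter_eq_empty_iff.2 fun b hb => (hlt i (hI' hi) b (mem_sdiff.1 hb).1).not_gt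
  have below_right : ∀ i ∈ I'', (J' \ I').filter (· < i) = J' \ I' := fun i hi =>
    filter_true_of_mem fun b hb => hlt b (mem_sdiff.1 hb).1 i (hI'' hi)
  calc ellJ (J' ∪ J'') (I' ∪ I'')
      = ∑ i ∈ I' ∪ I'', (#((J' \ I').filter (· < i)) + #((J'' \ I'').filter (· < i))) := by
        refine sum_congr rfl fun i _ => ?_
        rw [union_sdiff_union_of_disjoint hd hI' hI'', filter_union,
          card_union_of_disjoint (hdD.mono (filter_subset _ _) (filter_subset _ _))]
    _ = ∑ i ∈ I', #((J' \ I').filter (· < i))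
          + ∑ i ∈ I'', (#(J' \ I') + #((J'' \ I'').filter (· < i))) := by
        rw [sum_union hdI]
        congr 1 <;> refine sum_congr rfl fun i hi => ?_
        · rw [below_left i hi, card_empty, add_zero]
        · rw [below_right i hi]
    _ = ellJ J' I' + ellJ J'' I'' + #I'' * #(J' \ I') := by
        rw [sum_add_distrib, sum_const, smul_eq_mul, ellJ, ellJ]
        ring

lemma tauTerm_union :
    tauTerm R q (J' ∪ J'') (I' ∪ I'')
      = ((-1 : R) ^ (ellJ J' I' + ellJ J'' I'' + #I'' * #(J' \ I')) * (-q) ^ ((#I' + #I'') / 2)) •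
        (tMon R (J' \ I') * tMon R (J'' \ I'')) := by
  have hd : Disjoint J' J'' := disjoint_of_forall_lt hlt
  have hdI : Disjoint I' I'' := disjoint_of_forall_lt fun a ha b hb => hlt a (hI' ha) b (hI'' hb)
  rw [tauTerm, ellJ_union hlt hI' hI'', card_union_of_disjoint hdI,
    union_sdiff_union_of_disjoint hd hI' hI'',
    tMon_union_of_forall_lt R fun a ha b hb => hlt a (mem_sdiff.1 ha).1 b (mem_sdiff.1 hb).1]

lemma tauTerm_union_of_even (he' : 2 ∣ #I') (he'' : 2 ∣ #I'') :
    tauTerm R q (J' ∪ J'') (I' ∪ I'') = tauTerm R q J' I' * tauTerm R q J'' I'' := by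
  rw [tauTerm_union q hlt hI' hI'', tauTerm_mul_tauTerm, Nat.add_div_of_dvd_right he',
    pow_add _ _ (#I'' * _), (Even.mul_right (even_iff_two_dvd.2 he'') _).neg_one_pow, mul_one]

lemma tauTerm_union_of_odd (ho' : ¬ 2 ∣ #I') (ho'' : ¬ 2 ∣ #I'') :
    tauTerm R q (J' ∪ J'') (I' ∪ I'')
      = ((-1 : R) ^ #J' * q) • (tauTerm R q J' I' * tauTerm R q J'' I'') := by
  have hdiv : (#I' + #I'') / 2 = #I' / 2 + #I'' / 2 + 1 := by omega
  have hsign : (-1 : R) ^ (#I'' * #(J' \ I')) = -(-1) ^ #J' := by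
    rw [← card_sdiff_add_card_eq_card hI', pow_add,
      (Nat.odd_iff.2 (by omega) : Odd #I').neg_one_pow, pow_mul,
      (Nat.odd_iff.2 (by omega) : Odd #I'').neg_one_pow]
    ring
  rw [tauTerm_union q hlt hI' hI'', tauTerm_mul_tauTerm, smul_smul, pow_add, hsign, hdiv,
    pow_succ]
  congr 1
  ring

lemma tauPlus_summand_union :
    (if 2 ∣ #(I' ∪ I'') then tauTerm R q (J' ∪ J'') (I' ∪ I'') else 0)
      = (if 2 ∣ #I' then tauTerm R q J' I' else 0) * (if 2 ∣ #I'' then tauTerm R q J'' I'' else 0)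
        + ((-1 : R) ^ #J' * q) •
          ((if 2 ∣ #I' then 0 else tauTerm R q J' I') *
            (if 2 ∣ #I'' then 0 else tauTerm R q J'' I'')) := by
  have hcard : #(I' ∪ I'') = #I' + #I'' :=
    card_union_of_disjoint (disjoint_of_forall_lt fun a ha b hb => hlt a (hI' ha) b (hI'' hb))
  by_cases h' : 2 ∣ #I' <;> by_cases h'' : 2 ∣ #I''
  · simp [hcard, h', h'', tauTerm_union_of_even q hlt hI' hI'' h' h'', Nat.dvd_add h' h'']
  · simp [hcard, h', h'', (Nat.dvd_add_right h').not.2 h'']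
  · simp [hcard, h', h'', (Nat.dvd_add_left h'').not.2 h']
  · have : 2 ∣ #I' + #I'' := by omega
    simp [hcard, h', h'', tauTerm_union_of_odd q hlt hI' hI'' h' h'', this]

end

theorem stmt0_general {S : Type*} [LinearOrder S] {R : Type*} [CommRing R] (q : R)
    (J J' J'' : Finset S) (hJ : J = J' ∪ J'')
    (hlt : ∀ j' ∈ J', ∀ j'' ∈ J'', j' < j'') :
    tauPlus R q J = tauPlus R q J' * tauPlus R q J''
      + ((-1 : R) ^ J'.card * q) • (tauMinus R q J' * tauMinus R q J'') := by
  rw [hJ, tauPlus_eq_sum, sum_powerset_union (disjoint_of_forall_lt hlt), tauPlus_eq_sum,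
    tauPlus_eq_sum, tauMinus_eq_sum, tauMinus_eq_sum, sum_mul_sum, sum_mul_sum, smul_sum,
    ← sum_add_distrib]
  refine sum_congr rfl fun I' hI' => ?_
  rw [smul_sum, ← sum_add_distrib]
  exact sum_congr rfl fun I'' hI'' =>
    tauPlus_summand_union q hlt (mem_powerset.1 hI') (mem_powerset.1 hI'')

theorem stmt0 {S : Type*} [Fintype S] [LinearOrder S] {R : Type*} [CommRing R] (q : R)
    (J J' J'' : Finset S) (hJ : J = J' ∪ J'')
    (hlt : ∀ j' ∈ J', ∀ j'' ∈ J'', j' < j'') :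
    tauPlus R q J = tauPlus R q J' * tauPlus R q J''
      + ((-1 : R) ^ J'.card * q) • (tauMinus R q J' * tauMinus R q J'') :=
  stmt0_general q J J' J'' hJ hlt
end

section
/- For every nonempty J ⊆ S, the alternating sum Σ_{i=1}^{#J} (−1)^{#J−i} τ⁻_{J∖{j_i}} equals 0 in the free algebra A, where j_1 < ⋯ < j_{#J} are the elements of J. -/
open Finset

section

variable {S : Type*} [LinearOrder S]

lemma sum_neg_one_pow_card_filter_lt {R : Type*} [Ring R] (K : Finset S) :
    ∑ j ∈ K, (-1 : R) ^ #(K.filter (· < j)) = ∑ i ∈ range #K, (-1 : R) ^ i := by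
  induction K using Finset.induction_on_max with
  | empty => simp
  | insert a s ha ih =>
    have has : a ∉ s := fun h => lt_irrefl a (ha a h)
    have hfilter : ∀ j ∈ s, (insert a s).filter (· < j) = s.filter (· < j) := fun j hj => by
      rw [filter_insert, if_neg (ha j hj).not_gt]
    have htop : (insert a s).filter (· < a) = s := by
      rw [filter_insert, if_neg (lt_irrefl a), filter_true_of_mem ha]
    rw [sum_insert has, sum_congr rfl fun j hj => by rw [hfilter j hj], ih, htop,
      card_insert_of_notMem has, sum_range_succ, add_comm]

lemma sum_neg_one_pow_card_filter_lt_of_even {R : Type*} [Ring R] {K : Finset S}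
    (hK : Even #K) : ∑ j ∈ K, (-1 : R) ^ #(K.filter (· < j)) = 0 := by
  rw [sum_neg_one_pow_card_filter_lt, neg_one_geom_sum, if_pos hK]

lemma sum_sum_powerset_erase {M : Type*} [AddCommMonoid M] (J : Finset S)
    (f : S → Finset S → M) :
    ∑ j ∈ J, ∑ I ∈ (J.erase j).powerset, f j I = ∑ K ∈ J.powerset, ∑ j ∈ K, f j (K.erase j) := by
  have hinsert : ∀ j ∈ J, ∑ I ∈ (J.erase j).powerset, f j I
      = ∑ K ∈ J.powerset.filter (j ∈ ·), f j (K.erase j) := fun j hj => by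
    refine sum_nbij' (insert j) (erase · j) ?_ ?_ ?_ ?_ ?_ <;> intro I hI <;>
      simp only [mem_filter, mem_powerset] at hI ⊢
    · exact ⟨insert_subset hj (hI.trans (erase_subset j J)), mem_insert_self j I⟩
    · exact erase_subset_erase j hI.1
    · exact erase_insert fun h => (mem_erase.mp (hI h)).1 rfl
    · exact insert_erase hI.2
    · rw [erase_insert fun h => (mem_erase.mp (hI h)).1 rfl]
  rw [sum_congr rfl hinsert]
  exact sum_comm' (fun j K => by simp only [mem_filter, mem_powerset]; grind)

lemma card_filter_le_eq (J K : Finset S) {j : S} (hK : K ⊆ J) (hj : j ∈ K) :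
    #(J.filter (· ≤ j)) = #((J \ K).filter (· < j)) + #(K.filter (· < j)) + 1 := by
  have hle : J.filter (· ≤ j) = insert j (J.filter (· < j)) := by
    ext x; simp only [mem_filter, mem_insert, le_iff_lt_or_eq]; grind
  rw [hle, card_insert_of_notMem (by simp), ← card_union_of_disjoint
    (disjoint_filter_filter sdiff_disjoint), ← filter_union, sdiff_union_of_subset hK]

lemma erase_sdiff_erase_of_mem {J K : Finset S} {j : S} (hj : j ∈ K) :
    J.erase j \ K.erase j = J \ K := by
  rw [← erase_sdiff_distrib, erase_eq_of_notMem fun h => (mem_sdiff.mp h).2 hj]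

lemma ellJ_erase_erase_add {J K : Finset S} {j : S} (hj : j ∈ K) :
    ellJ (J.erase j) (K.erase j) + #((J \ K).filter (· < j)) = ellJ J K := by
  unfold ellJ
  rw [erase_sdiff_erase_of_mem hj]
  exact sum_erase_add K _ hj

lemma neg_one_pow_mul_neg_one_pow_ellJ_erase {R : Type*} [Monoid R] [HasDistribNeg R]
    {J K : Finset S} {j : S} (hK : K ⊆ J) (hj : j ∈ K) :
    (-1 : R) ^ (#J - #(J.filter (· ≤ j))) * (-1) ^ ellJ (J.erase j) (K.erase j)
      = (-1) ^ #(K.filter (· < j)) * (-1) ^ (#J + ellJ J K + 1) := by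
  have hle : #(J.filter (· ≤ j)) ≤ #J := card_filter_le _ _
  have hcard := card_filter_le_eq J K hK hj
  have hell := ellJ_erase_erase_add (J := J) hj
  rw [← pow_add, ← pow_add]
  exact neg_one_pow_congr (by simp only [Nat.even_iff]; omega)

lemma sum_neg_one_pow_smul_tauMinus_term_erase_eq_zero {R : Type*} [CommRing R] (q : R)
    {J K : Finset S} (hK : K ⊆ J) :
    ∑ j ∈ K, (-1 : R) ^ (#J - #(J.filter (· ≤ j))) •
      (if ¬2 ∣ #(K.erase j) then
        ((-1) ^ ellJ (J.erase j) (K.erase j) * (-q) ^ ((#(K.erase j) - 1) / 2)) •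
          tMon R (J.erase j \ K.erase j)
      else 0) = 0 := by
  rcases Nat.even_or_odd #K with hK2 | hK2
  · calc _ = ∑ j ∈ K, (-1 : R) ^ #(K.filter (· < j)) •
            ((-1) ^ (#J + ellJ J K + 1) * (-q) ^ ((#K - 2) / 2)) • tMon R (J \ K) := by
          refine sum_congr rfl fun j hj => ?_
          have hodd : ¬2 ∣ #(K.erase j) := by
            rw [card_erase_of_mem hj]; rw [Nat.even_iff] at hK2
            have := card_pos.mpr ⟨j, hj⟩; omega
          rw [if_pos hodd, smul_smul, smul_smul, ← mul_assoc, ← mul_assoc,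
            neg_one_pow_mul_neg_one_pow_ellJ_erase hK hj, card_erase_of_mem hj,
            erase_sdiff_erase_of_mem hj, Nat.sub_sub]
      _ = 0 := by rw [← sum_smul, sum_neg_one_pow_card_filter_lt_of_even hK2, zero_smul]
  · refine sum_eq_zero fun j hj => ?_
    have heven : 2 ∣ #(K.erase j) := by
      rw [card_erase_of_mem hj]; rw [Nat.odd_iff] at hK2; omega
    rw [if_neg (not_not.mpr heven), smul_zero]

end

theorem stmt3_general {S : Type*} [LinearOrder S] {R : Type*} [CommRing R] (q : R)
    (J : Finset S) :
    ∑ j ∈ J, ((-1 : R) ^ (J.card - (J.filter (· ≤ j)).card)) • tauMinus R q (J.erase j)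
      = 0 := by
  simp only [tauMinus, smul_sum, sum_filter]
  rw [sum_sum_powerset_erase]
  exact sum_eq_zero fun K hK =>
    sum_neg_one_pow_smul_tauMinus_term_erase_eq_zero q (mem_powerset.mp hK)

theorem stmt3 {S : Type*} [Fintype S] [LinearOrder S] {R : Type*} [CommRing R] (q : R)
    (J : Finset S) (hJ : J.Nonempty) :
    ∑ j ∈ J, ((-1 : R) ^ (J.card - (J.filter (· ≤ j)).card)) • tauMinus R q (J.erase j)
      = 0 :=
  stmt3_general q J
end

section
/- Let J ⊆ S and s ∈ S with s ∉ J, and let J' = {j ∈ J : j < s}. Then t_s τ⁺_J − ((−1)^{#J'} τ⁺_{J∪{s}} + q τ⁻_J) ∈ I_q(∅) and t_s τ⁻_J − ((−1)^{#J'−1} τ⁻_{J∪{s}} + τ⁺_J) ∈ I_q(∅). -/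
/-- Generators of the ideal `I_q(𝔐)`. -/
def gens (R : Type*) [CommRing R] {S : Type*} [LinearOrder S] (q : R) (M : Set (Finset S)) :
    Set (FreeAlgebra R S) :=
  (Set.range fun s : S => FreeAlgebra.ι R s ^ 2 - algebraMap R _ q) ∪
  {x | ∃ r s : S, s < r ∧
      x = FreeAlgebra.ι R r * FreeAlgebra.ι R s + FreeAlgebra.ι R s * FreeAlgebra.ι R r
        - 2 * algebraMap R _ q} ∪
  {x | ∃ J ∈ M, x = tauMinus R q J}

/-- The two-sided ideal `I_q(𝔐)` of the free algebra. -/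
noncomputable def Iq (R : Type*) [CommRing R] {S : Type*} [LinearOrder S] (q : R)
    (M : Set (Finset S)) : TwoSidedIdeal (FreeAlgebra R S) :=
  TwoSidedIdeal.span (gens R q M)


open Finset

section OrderedProd
variable {S : Type*} [LinearOrder S] {M : Type*} [Monoid M]

def orderedProd (u : S → M) (J : Finset S) : M :=
  ((J.sort (· ≤ ·)).map u).prod

@[simp]
lemma orderedProd_empty (u : S → M) : orderedProd u ∅ = 1 := by
  simp [orderedProd]

lemma orderedProd_insert_of_forall_lt (u : S → M) {a : S} {J : Finset S}
    (ha : ∀ x ∈ J, a < x) : orderedProd u (insert a J) = u a * orderedProd u J := by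
  rw [orderedProd, sort_insert _ (fun x hx => (ha x hx).le) (fun h => (ha a h).false),
    List.map_cons, List.prod_cons, orderedProd]

lemma mul_orderedProd_of_anticommute {A : Type*} [Ring A] (u : S → A)
    (hu : ∀ a b, a ≠ b → u a * u b = -(u b * u a)) {s : S} {J : Finset S} (hs : s ∉ J) :
    u s * orderedProd u J = (-1 : ℤ) ^ #(J.filter (· < s)) • orderedProd u (insert s J) := by
  induction J using Finset.induction_on_min with
  | empty => simp [orderedProd]
  | insert m K hm ih =>
    have hsK : s ∉ K := fun h => hs (mem_insert_of_mem h)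
    have hms : m ≠ s := fun h => hs (h ▸ mem_insert_self m K)
    rcases hms.lt_or_gt with hlt | hlt
    · have hmsK : ∀ x ∈ insert s K, m < x := by
        simpa [forall_mem_insert] using ⟨hlt, hm⟩
      have hmK : m ∉ K := fun h => (hm m h).false
      rw [filter_insert, if_pos hlt, card_insert_of_notMem (fun h => hmK (mem_filter.mp h).1),
        orderedProd_insert_of_forall_lt u hm, ← mul_assoc, hu s m hms.symm, neg_mul, mul_assoc,
        ih hsK, Finset.insert_comm, orderedProd_insert_of_forall_lt u hmsK, mul_smul_comm,
        pow_succ, mul_neg_one, neg_smul, ← neg_smul]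
    · have hsmK : ∀ x ∈ insert m K, s < x := by
        simpa [forall_mem_insert] using ⟨hlt, fun x hx => hlt.trans (hm x hx)⟩
      have : (insert m K).filter (· < s) = ∅ :=
        filter_eq_empty_iff.mpr fun x hx => (hsmK x hx).not_gt
      rw [this, card_empty, pow_zero, one_smul, orderedProd_insert_of_forall_lt u hsmK]

end OrderedProd

section TauRecursion
variable {S : Type*} [LinearOrder S] {R : Type*} [CommRing R] (q : R)

lemma tMon_insert_of_forall_lt {m : S} {K : Finset S} (hm : ∀ x ∈ K, m < x) :
    tMon R (insert m K) = FreeAlgebra.ι R m * tMon R K :=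
  orderedProd_insert_of_forall_lt (FreeAlgebra.ι R) hm

lemma ellJ_insert_of_forall_lt {m : S} {K I : Finset S} (hm : ∀ x ∈ K, m < x) (hI : I ⊆ K) :
    ellJ (insert m K) I = ellJ K I + #I := by
  have hmK : m ∉ K := fun h => (hm m h).false
  rw [ellJ, ellJ, card_eq_sum_ones, ← sum_add_distrib]
  refine sum_congr rfl fun i hi => ?_
  rw [insert_sdiff_of_notMem _ (fun h => hmK (hI h)), filter_insert, if_pos (hm i (hI hi)),
    card_insert_of_notMem fun h => hmK (mem_sdiff.mp (mem_filter.mp h).1).1]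

lemma ellJ_insert_insert_of_forall_lt {m : S} {K I : Finset S} (hm : ∀ x ∈ K, m < x)
    (hI : I ⊆ K) : ellJ (insert m K) (insert m I) = ellJ K I := by
  have hmK : m ∉ K := fun h => (hm m h).false
  have hsdiff : insert m K \ insert m I = K \ I := by
    rw [insert_sdiff_insert, sdiff_insert_of_notMem hmK]
  have hfilter : (K \ I).filter (· < m) = ∅ :=
    filter_eq_empty_iff.mpr fun x hx => (hm x (mem_sdiff.mp hx).1).not_gt
  rw [ellJ, ellJ, hsdiff, sum_insert fun h => hmK (hI h), hfilter, card_empty, zero_add]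

@[simp]
lemma tauPlus_empty : tauPlus R q (∅ : Finset S) = 1 := by
  simp [tauPlus, ellJ, tMon, filter_singleton]

@[simp]
lemma tauMinus_empty : tauMinus R q (∅ : Finset S) = 0 := by
  simp [tauMinus, filter_singleton]

lemma tauPlus_insert_of_forall_lt {m : S} {K : Finset S} (hm : ∀ x ∈ K, m < x) :
    tauPlus R q (insert m K) = FreeAlgebra.ι R m * tauPlus R q K - q • tauMinus R q K := by
  have hmK : m ∉ K := fun h => (hm m h).false
  rw [tauPlus, tauPlus, tauMinus, sum_filter, sum_filter, sum_filter, sum_powerset_insert hmK,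
    mul_sum, smul_sum, sub_eq_add_neg, ← sum_neg_distrib]
  congr 1 <;> refine sum_congr rfl fun I hI => ?_ <;> have hIK := mem_powerset.mp hI
  · split_ifs with hI2
    · rw [ellJ_insert_of_forall_lt hm hIK, insert_sdiff_of_notMem _ fun h => hmK (hIK h),
        tMon_insert_of_forall_lt fun x hx => hm x (mem_sdiff.mp hx).1, mul_smul_comm,
        pow_add, (even_iff_two_dvd.mpr hI2).neg_one_pow, mul_one]
    · rw [mul_zero]
  · rw [card_insert_of_notMem fun h => hmK (hIK h), ellJ_insert_insert_of_forall_lt hm hIK,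
      insert_sdiff_insert, sdiff_insert_of_notMem hmK]
    split_ifs with hI1 hI hI
    · omega
    · rw [smul_smul, ← neg_smul, show (I.card + 1) / 2 = (I.card - 1) / 2 + 1 by omega, pow_succ]
      ring_nf
    · rw [smul_zero, neg_zero]
    · omega

lemma tauMinus_insert_of_forall_lt {m : S} {K : Finset S} (hm : ∀ x ∈ K, m < x) :
    tauMinus R q (insert m K) = tauPlus R q K - FreeAlgebra.ι R m * tauMinus R q K := by
  have hmK : m ∉ K := fun h => (hm m h).false
  rw [tauPlus, tauMinus, tauMinus, sum_filter, sum_filter, sum_filter, sum_powerset_insert hmK,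
    mul_sum, sub_eq_add_neg, ← sum_neg_distrib, add_comm]
  congr 1 <;> refine sum_congr rfl fun I hI => ?_ <;> have hIK := mem_powerset.mp hI
  · rw [card_insert_of_notMem fun h => hmK (hIK h), ellJ_insert_insert_of_forall_lt hm hIK,
      insert_sdiff_insert, sdiff_insert_of_notMem hmK]
    split_ifs with hI1 hI hI
    · omega
    · rfl
    · rfl
    · omega
  · split_ifs with hI2
    · rw [mul_zero, neg_zero]
    · rw [ellJ_insert_of_forall_lt hm hIK, insert_sdiff_of_notMem _ fun h => hmK (hIK h),
        tMon_insert_of_forall_lt fun x hx => hm x (mem_sdiff.mp hx).1, mul_smul_comm,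
        pow_add, (Nat.odd_iff.mpr (show #I % 2 = 1 by omega)).neg_one_pow, mul_neg_one, neg_mul,
        neg_smul]

end TauRecursion

section TauMatrix
variable {B : Type*} [Ring B]

def tauMatrix (c x : B) : Matrix (Fin 2) (Fin 2) B :=
  !![x, -c; 1, -x]

@[simp] lemma tauMatrix_apply_zero_zero (c x : B) : tauMatrix c x 0 0 = x := rfl
@[simp] lemma tauMatrix_apply_zero_one (c x : B) : tauMatrix c x 0 1 = -c := rfl
@[simp] lemma tauMatrix_apply_one_zero (c x : B) : tauMatrix c x 1 0 = 1 := rfl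
@[simp] lemma tauMatrix_apply_one_one (c x : B) : tauMatrix c x 1 1 = -x := rfl

lemma tauMatrix_mul_tauMatrix {c x y : B} (hx : Commute c x) (hy : Commute c y)
    (h : x * y + y * x = 2 * c) :
    tauMatrix c x * tauMatrix c y = -(tauMatrix c y * tauMatrix c x) := by
  rw [eq_neg_iff_add_eq_zero]
  ext i j
  fin_cases i <;> fin_cases j <;>
    simp only [Fin.zero_eta, Fin.mk_one, Matrix.add_apply, Matrix.mul_apply, Fin.sum_univ_two,
      tauMatrix_apply_zero_zero, tauMatrix_apply_zero_one, tauMatrix_apply_one_zero,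
      tauMatrix_apply_one_one, Matrix.zero_apply, mul_one, one_mul, mul_neg, neg_mul, neg_neg]
  · rw [add_add_add_comm, h, two_mul]
    abel
  · rw [hx.eq, hy.eq]
    abel
  · abel
  · rw [add_add_add_comm, h, two_mul]
    abel

variable {S : Type*} [LinearOrder S] {R : Type*} [CommRing R] [Algebra R B] (q : R)

lemma orderedProd_tauMatrix_apply (φ : FreeAlgebra R S →ₐ[R] B) (J : Finset S) :
    orderedProd (fun j => tauMatrix (algebraMap R B q) (φ (FreeAlgebra.ι R j))) J 0 0
        = φ (tauPlus R q J) ∧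
      orderedProd (fun j => tauMatrix (algebraMap R B q) (φ (FreeAlgebra.ι R j))) J 1 0
        = φ (tauMinus R q J) := by
  induction J using Finset.induction_on_min with
  | empty => simp
  | insert m K hm ih =>
    rw [orderedProd_insert_of_forall_lt _ hm, tauPlus_insert_of_forall_lt q hm,
      tauMinus_insert_of_forall_lt q hm, Matrix.mul_apply, Matrix.mul_apply, Fin.sum_univ_two,
      Fin.sum_univ_two, ih.1, ih.2]
    simp [Algebra.smul_def, sub_eq_add_neg]

end TauMatrix

section Main
variable {S : Type*} [LinearOrder S] {R : Type*} [CommRing R] {B : Type*} [Ring B] [Algebra R B]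
  (q : R)

theorem map_ι_mul_tau (φ : FreeAlgebra R S →ₐ[R] B)
    (hφ : ∀ r s, r ≠ s → φ (FreeAlgebra.ι R r) * φ (FreeAlgebra.ι R s)
      + φ (FreeAlgebra.ι R s) * φ (FreeAlgebra.ι R r) = 2 * algebraMap R B q)
    {J : Finset S} {s : S} (hs : s ∉ J) :
    φ (FreeAlgebra.ι R s * tauPlus R q J)
        = φ ((-1 : R) ^ #(J.filter (· < s)) • tauPlus R q (insert s J) + q • tauMinus R q J) ∧
      φ (FreeAlgebra.ι R s * tauMinus R q J)
        = φ ((-1 : R) ^ (#(J.filter (· < s)) + 1) • tauMinus R q (insert s J)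
          + tauPlus R q J) := by
  set U := fun j => tauMatrix (algebraMap R B q) (φ (FreeAlgebra.ι R j))
  have hU := mul_orderedProd_of_anticommute U (fun a b hab => tauMatrix_mul_tauMatrix
    (Algebra.commute_algebraMap_left q _) (Algebra.commute_algebraMap_left q _) (hφ a b hab)) hs
  obtain ⟨hJ0, hJ1⟩ := orderedProd_tauMatrix_apply q φ J
  obtain ⟨hsJ0, hsJ1⟩ := orderedProd_tauMatrix_apply q φ (insert s J)
  have e0 := congrFun (congrFun hU 0) 0
  have e1 := congrFun (congrFun hU 1) 0
  rw [Matrix.mul_apply, Fin.sum_univ_two, Matrix.smul_apply, hJ0, hJ1, hsJ0] at e0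
  rw [Matrix.mul_apply, Fin.sum_univ_two, Matrix.smul_apply, hJ0, hJ1, hsJ1] at e1
  simp only [U, tauMatrix_apply_zero_zero, tauMatrix_apply_zero_one, tauMatrix_apply_one_zero,
    tauMatrix_apply_one_one, zsmul_eq_mul, Int.cast_pow, Int.cast_neg, Int.cast_one, one_mul,
    neg_mul] at e0 e1
  simp only [map_mul, map_add, Algebra.smul_def, AlgHom.commutes, map_pow, map_neg, map_one]
  constructor
  · rw [← e0]
    abel
  · rw [pow_succ, mul_neg_one, neg_mul, ← e1]
    abel

end Main

lemma sub_mem_iff_mkₐ_eq (R : Type*) [CommSemiring R] {A : Type*} [Ring A] [Algebra R A]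
    (I : TwoSidedIdeal A) (x y : A) :
    x - y ∈ I ↔ RingCon.mkₐ R I.ringCon x = RingCon.mkₐ R I.ringCon y :=
  (I.rel_iff x y).symm.trans (RingCon.eq _).symm

lemma ι_mul_ι_add_ι_mul_ι_sub_mem_Iq {S : Type*} [LinearOrder S] {R : Type*} [CommRing R]
    (q : R) (M : Set (Finset S)) {r s : S} (hrs : r ≠ s) :
    FreeAlgebra.ι R r * FreeAlgebra.ι R s + FreeAlgebra.ι R s * FreeAlgebra.ι R r
      - 2 * algebraMap R _ q ∈ Iq R q M := by
  rcases hrs.lt_or_gt with hlt | hlt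
  · rw [add_comm]
    exact TwoSidedIdeal.subset_span (Or.inl (Or.inr ⟨s, r, hlt, rfl⟩))
  · exact TwoSidedIdeal.subset_span (Or.inl (Or.inr ⟨r, s, hlt, rfl⟩))

theorem stmt7_general {S : Type*} [LinearOrder S] {R : Type*} [CommRing R] (q : R)
    (J : Finset S) (s : S) (hs : s ∉ J) :
    FreeAlgebra.ι R s * tauPlus R q J
        - (((-1 : R) ^ (J.filter (· < s)).card) • tauPlus R q (insert s J)
            + q • tauMinus R q J) ∈ Iq R q (∅ : Set (Finset S)) ∧
    FreeAlgebra.ι R s * tauMinus R q J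
        - (((-1 : R) ^ ((J.filter (· < s)).card + 1)) • tauMinus R q (insert s J)
            + tauPlus R q J) ∈ Iq R q (∅ : Set (Finset S)) := by
  set π := RingCon.mkₐ R (Iq R q (∅ : Set (Finset S))).ringCon
  have hπ : ∀ r t, r ≠ t → π (FreeAlgebra.ι R r) * π (FreeAlgebra.ι R t)
      + π (FreeAlgebra.ι R t) * π (FreeAlgebra.ι R r) = 2 * algebraMap R _ q := fun r t hrt => by
    simpa only [map_add, map_mul, map_ofNat, AlgHom.commutes] using
      (sub_mem_iff_mkₐ_eq R _ _ _).mp (ι_mul_ι_add_ι_mul_ι_sub_mem_Iq q ∅ hrt)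
  obtain ⟨hplus, hminus⟩ := map_ι_mul_tau q π hπ hs
  exact ⟨(sub_mem_iff_mkₐ_eq R _ _ _).mpr hplus, (sub_mem_iff_mkₐ_eq R _ _ _).mpr hminus⟩

theorem stmt7 {S : Type*} [Fintype S] [LinearOrder S] {R : Type*} [CommRing R] (q : R)
    (J : Finset S) (s : S) (hs : s ∉ J) :
    FreeAlgebra.ι R s * tauPlus R q J
        - (((-1 : R) ^ (J.filter (· < s)).card) • tauPlus R q (insert s J)
            + q • tauMinus R q J) ∈ Iq R q (∅ : Set (Finset S)) ∧
    FreeAlgebra.ι R s * tauMinus R q J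
        - (((-1 : R) ^ ((J.filter (· < s)).card + 1)) • tauMinus R q (insert s J)
            + tauPlus R q J) ∈ Iq R q (∅ : Set (Finset S)) :=
  stmt7_general q J s hs
end

section
/- Let 𝔐 ⊆ 2^S be any set system and let I_q(𝔐) ⊆ A be the two-sided ideal generated by t_s² − q (s ∈ S), t_r t_s + t_s t_r − 2q (s < r), and τ⁻_J for J ∈ 𝔐. If J ⊆ S is nonempty and τ⁻_J ∈ I_q(𝔐), then τ⁺_J ∈ I_q(𝔐). -/
/-!
Let `a = min J`. Multiplying the term of `τ⁻_J` indexed by `I` on the left by `t_a` gives, if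
`a ∈ I`, the term of `τ⁺_J` indexed by `I \ {a}`, and if `a ∉ I`, the element
`t_a² t_{J \ (I ∪ {a})}`, which is `q t_{J \ (I ∪ {a})}`, the term of `τ⁺_J` indexed by `I ∪ {a}`,
up to a multiple of `t_a² - q`; the signs match because moving `a` in or out of `I`
changes `ℓ_J` by `#I`. Hence `τ⁺_J ≡ t_a τ⁻_J` modulo `I_q(𝔐)`.
-/

open FreeAlgebra Finset

section

variable {R : Type*} [CommRing R] {S : Type*} [LinearOrder S]

lemma tMon_insert_of_forall_le {a : S} {L : Finset S} (ha : ∀ b ∈ L, a ≤ b) (haL : a ∉ L) :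
    tMon R (insert a L) = ι R a * tMon R L := by
  rw [tMon, tMon, Finset.sort_insert _ ha haL, List.map_cons, List.prod_cons]

def tauMinusCoeff (q : R) (J I : Finset S) : R :=
  (-1) ^ ellJ J I * (-q) ^ ((#I - 1) / 2)

def tauPlusCoeff (q : R) (J I : Finset S) : R :=
  (-1) ^ ellJ J I * (-q) ^ (#I / 2)

lemma tauMinus_eq_sum_tauMinusCoeff (q : R) (J : Finset S) :
    tauMinus R q J = ∑ I ∈ J.powerset with ¬ 2 ∣ #I, tauMinusCoeff q J I • tMon R (J \ I) := rfl

lemma tauPlus_eq_sum_tauPlusCoeff (q : R) (J : Finset S) :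
    tauPlus R q J = ∑ I ∈ J.powerset with 2 ∣ #I, tauPlusCoeff q J I • tMon R (J \ I) := rfl

lemma ι_sq_sub_algebraMap_mem_Iq (q : R) (M : Set (Finset S)) (s : S) :
    ι R s ^ 2 - algebraMap R _ q ∈ Iq R q M :=
  TwoSidedIdeal.subset_span (Or.inl (Or.inl ⟨s, rfl⟩))

section MinElement

variable {J I : Finset S} {a : S}

lemma tMon_sdiff_eq_ι_mul (haJ : a ∈ J) (hmin : ∀ b ∈ J, a ≤ b) (haI : a ∉ I) :
    tMon R (J \ I) = ι R a * tMon R (J \ insert a I) := by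
  have hmem : a ∈ J \ I := mem_sdiff.2 ⟨haJ, haI⟩
  rw [sdiff_insert, ← tMon_insert_of_forall_le, insert_erase hmem]
  · exact fun b hb => hmin b (mem_sdiff.1 (mem_of_mem_erase hb)).1
  · exact notMem_erase a _

lemma ellJ_eq_ellJ_insert_add_card (haJ : a ∈ J) (hmin : ∀ b ∈ J, a ≤ b) (hI : I ⊆ J.erase a) :
    ellJ J I = ellJ J (insert a I) + #I := by
  have haI : a ∉ I := fun h => (mem_erase.1 (hI h)).1 rfl
  have hnone : #{b ∈ J \ insert a I | b < a} = 0 := by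
    rw [card_eq_zero, filter_eq_empty_iff]
    exact fun b hb => not_lt.2 (hmin b (mem_sdiff.1 hb).1)
  -- `a` is the one element of `J \ I` below each `i ∈ I` that is lost when `a` joins `I`
  have hloss : ∀ i ∈ I, #{b ∈ J \ insert a I | b < i} + 1 = #{b ∈ J \ I | b < i} := by
    intro i hi
    have hai : a < i := lt_of_le_of_ne (hmin i (mem_of_mem_erase (hI hi)))
      (Ne.symm (mem_erase.1 (hI hi)).1)
    have hmem : a ∈ {b ∈ J \ I | b < i} := by simp [haJ, haI, hai]
    rw [sdiff_insert, filter_erase, card_erase_add_one hmem]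
  rw [ellJ, ellJ, sum_insert haI, hnone, zero_add, ← sum_congr rfl hloss, sum_add_distrib,
    card_eq_sum_ones]

lemma tauPlusCoeff_eq_tauMinusCoeff_insert (q : R) (haJ : a ∈ J) (hmin : ∀ b ∈ J, a ≤ b)
    (hI : I ⊆ J.erase a) (heven : Even #I) :
    tauPlusCoeff q J I = tauMinusCoeff q J (insert a I) := by
  have haI : a ∉ I := fun h => (mem_erase.1 (hI h)).1 rfl
  rw [tauPlusCoeff, tauMinusCoeff, ellJ_eq_ellJ_insert_add_card haJ hmin hI, pow_add,
    heven.neg_one_pow, mul_one, card_insert_of_notMem haI, Nat.add_sub_cancel]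

lemma tauPlusCoeff_insert_eq_mul_tauMinusCoeff (q : R) (haJ : a ∈ J) (hmin : ∀ b ∈ J, a ≤ b)
    (hI : I ⊆ J.erase a) (hodd : Odd #I) :
    tauPlusCoeff q J (insert a I) = q * tauMinusCoeff q J I := by
  have haI : a ∉ I := fun h => (mem_erase.1 (hI h)).1 rfl
  have hdiv : (#I + 1) / 2 = (#I - 1) / 2 + 1 := by obtain ⟨k, hk⟩ := hodd; omega
  rw [tauPlusCoeff, tauMinusCoeff, ellJ_eq_ellJ_insert_add_card haJ hmin hI, pow_add,
    hodd.neg_one_pow, card_insert_of_notMem haI, hdiv, pow_succ]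
  ring

lemma tauPlus_eq_ι_mul_tauMinus_sub (q : R) (haJ : a ∈ J) (hmin : ∀ b ∈ J, a ≤ b) :
    tauPlus R q J = ι R a * tauMinus R q J - ∑ I ∈ (J.erase a).powerset with ¬ 2 ∣ #I,
      tauMinusCoeff q J I • ((ι R a ^ 2 - algebraMap R _ q) * tMon R (J \ insert a I)) := by
  have hsplit : ∀ f : Finset S → FreeAlgebra R S,
      ∑ I ∈ J.powerset, f I = ∑ I ∈ (J.erase a).powerset, (f I + f (insert a I)) := by
    intro f
    rw [sum_add_distrib, ← sum_powerset_insert (notMem_erase a J), insert_erase haJ]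
  rw [tauPlus_eq_sum_tauPlusCoeff, tauMinus_eq_sum_tauMinusCoeff, sum_filter, sum_filter,
    sum_filter, hsplit, hsplit, mul_sum, ← sum_sub_distrib]
  refine sum_congr rfl fun I hI => ?_
  have hIa : I ⊆ J.erase a := mem_powerset.1 hI
  have haI : a ∉ I := fun h => (mem_erase.1 (hIa h)).1 rfl
  have hmon := tMon_sdiff_eq_ι_mul (R := R) haJ hmin haI
  rw [card_insert_of_notMem haI]
  by_cases h2 : 2 ∣ #I
  · have h2' : ¬ 2 ∣ #I + 1 := by omega
    rw [if_pos h2, if_neg h2', if_neg (not_not_intro h2), if_pos h2', if_neg (not_not_intro h2),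
      tauPlusCoeff_eq_tauMinusCoeff_insert q haJ hmin hIa (even_iff_two_dvd.2 h2), hmon,
      add_zero, zero_add, sub_zero, mul_smul_comm]
  · have h2' : 2 ∣ #I + 1 := by omega
    rw [if_neg h2, if_pos h2', if_pos h2, if_neg (not_not_intro h2'), if_pos h2,
      tauPlusCoeff_insert_eq_mul_tauMinusCoeff q haJ hmin hIa (Nat.odd_iff.2 (by omega)), hmon,
      add_zero, zero_add, mul_smul_comm, ← mul_assoc, ← pow_two, sub_mul, smul_sub,
      ← Algebra.smul_def, smul_smul, sub_sub_cancel, mul_comm]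

end MinElement

end

theorem stmt9_general {S : Type*} [LinearOrder S] {R : Type*} [CommRing R] (q : R)
    (M : Set (Finset S)) (J : Finset S) (hJ : J.Nonempty)
    (h : tauMinus R q J ∈ Iq R q M) :
    tauPlus R q J ∈ Iq R q M := by
  rw [tauPlus_eq_ι_mul_tauMinus_sub q (J.min'_mem hJ) fun b hb => J.min'_le b hb]
  refine sub_mem (TwoSidedIdeal.mul_mem_left _ _ _ h) (sum_mem fun I _ => ?_)
  rw [Algebra.smul_def]
  exact TwoSidedIdeal.mul_mem_left _ _ _
    (TwoSidedIdeal.mul_mem_right _ _ _ (ι_sq_sub_algebraMap_mem_Iq q M _))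

theorem stmt9 {S : Type*} [Fintype S] [LinearOrder S] {R : Type*} [CommRing R] (q : R)
    (M : Set (Finset S)) (J : Finset S) (hJ : J.Nonempty)
    (h : tauMinus R q J ∈ Iq R q M) :
    tauPlus R q J ∈ Iq R q M :=
  stmt9_general q M J hJ h
end

section
/- Let 𝔐 ⊆ 2^S be a set system and J ⊆ S nonempty with τ⁻_J ∈ I_q(𝔐), and let s ∈ S. If either r < s for all r ∈ J, or #J ≥ 2 and s < j_2 (the second-smallest element of J), then τ⁻_{J∪{s}} ∈ I_q(𝔐). -/
/-!
Splitting off an extreme element of the index set gives, for `s` below every element of `T`,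
`τ⁻_{s∪T} = τ⁺_T - t_s τ⁻_T` and `τ⁺_{s∪T} = t_s τ⁺_T - q τ⁻_T`, and for `s` above every element,
`τ⁻_{T∪s} = τ⁻_T t_s ± τ⁺_T`. The first two combine to
`τ⁺_J = t_{j₁} τ⁻_J + (t_{j₁}² - q) τ⁻_{J∖j₁}`, so `τ⁺_J` lies in `I_q(𝔐)` along with `τ⁻_J`.
The recursions then write `τ⁻_{J∪s}` in terms of `τ⁻_J`, `τ⁺_J` and, when `j₁ < s < j₂`, of the
relations `t_s t_{j₁} + t_{j₁} t_s - 2q` and `t_{j₁}² - q` multiplied by `τ⁻_{J∖j₁}`.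
-/

open Finset

section development

variable {S : Type*} [LinearOrder S] {R : Type*} [CommRing R]

lemma sort_insert_of_forall_le {s : S} {T : Finset S} (h : ∀ t ∈ T, t ≤ s) (hs : s ∉ T) :
    (insert s T).sort (· ≤ ·) = T.sort (· ≤ ·) ++ [s] := by
  refine List.Perm.eq_of_pairwise' (pairwise_sort _ _) ?_ ?_
  · simpa [List.pairwise_append] using h
  · refine List.perm_of_nodup_nodup_toFinset_eq (sort_nodup _ _) ?_ ?_
    · simpa [List.nodup_append] using hs
    · ext; simp

lemma tMon_insert_of_forall_lt_s10 {s : S} {T : Finset S} (hs : s ∉ T) (h : ∀ t ∈ T, s < t) :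
    tMon R (insert s T) = FreeAlgebra.ι R s * tMon R T := by
  rw [tMon, sort_insert _ (fun t ht => (h t ht).le) hs, List.map_cons, List.prod_cons, tMon]

lemma tMon_insert_of_forall_gt {s : S} {T : Finset S} (hs : s ∉ T) (h : ∀ t ∈ T, t < s) :
    tMon R (insert s T) = tMon R T * FreeAlgebra.ι R s := by
  rw [tMon, sort_insert_of_forall_le (fun t ht => (h t ht).le) hs, List.map_append,
    List.prod_append, tMon, List.map_singleton, List.prod_singleton]

lemma sum_powerset_insert_filter_card {β : Type*} [AddCommMonoid β] (p : ℕ → Prop)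
    [DecidablePred p] {s : S} {T : Finset S} (hs : s ∉ T) (f : Finset S → β) :
    ∑ I ∈ (insert s T).powerset with p #I, f I =
      ∑ I ∈ T.powerset with p #I, f I + ∑ I ∈ T.powerset with p (#I + 1), f (insert s I) := by
  simp only [sum_filter]
  rw [sum_powerset_insert hs]
  congr 1
  refine sum_congr rfl fun I hI => ?_
  rw [card_insert_of_notMem fun h => hs (mem_powerset.1 hI h)]

lemma sum_powerset_insert_odd {β : Type*} [AddCommMonoid β] {s : S} {T : Finset S} (hs : s ∉ T)
    (f : Finset S → β) :
    ∑ I ∈ (insert s T).powerset with ¬ 2 ∣ #I, f I =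
      ∑ I ∈ T.powerset with ¬ 2 ∣ #I, f I + ∑ I ∈ T.powerset with 2 ∣ #I, f (insert s I) := by
  rw [sum_powerset_insert_filter_card (fun n => ¬ 2 ∣ n) hs]
  congr 1
  exact sum_congr (filter_congr fun _ _ => by omega) fun _ _ => rfl

lemma sum_powerset_insert_even {β : Type*} [AddCommMonoid β] {s : S} {T : Finset S} (hs : s ∉ T)
    (f : Finset S → β) :
    ∑ I ∈ (insert s T).powerset with 2 ∣ #I, f I =
      ∑ I ∈ T.powerset with 2 ∣ #I, f I + ∑ I ∈ T.powerset with ¬ 2 ∣ #I, f (insert s I) := by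
  rw [sum_powerset_insert_filter_card (2 ∣ ·) hs]
  congr 1
  exact sum_congr (filter_congr fun _ _ => by omega) fun _ _ => rfl

variable (R) in
noncomputable def signedMon (J I : Finset S) : FreeAlgebra R S :=
  (-1 : R) ^ ellJ J I • tMon R (J \ I)

lemma tauMinus_eq_sum_signedMon (q : R) (J : Finset S) :
    tauMinus R q J = ∑ I ∈ J.powerset with ¬ 2 ∣ #I, (-q) ^ ((#I - 1) / 2) • signedMon R J I := by
  simp only [tauMinus, signedMon, smul_smul, mul_comm]

lemma tauPlus_eq_sum_signedMon (q : R) (J : Finset S) :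
    tauPlus R q J = ∑ I ∈ J.powerset with 2 ∣ #I, (-q) ^ (#I / 2) • signedMon R J I := by
  simp only [tauPlus, signedMon, smul_smul, mul_comm]

section insertion

variable {s : S} {T I : Finset S}

lemma ellJ_insert_of_forall_lt_s10 (hs : s ∉ T) (h : ∀ t ∈ T, s < t) (hI : I ⊆ T) :
    ellJ (insert s T) I = ellJ T I + #I := by
  rw [ellJ, ellJ, card_eq_sum_ones, ← sum_add_distrib]
  refine sum_congr rfl fun i hi => ?_
  rw [insert_sdiff_of_notMem _ (fun h => hs (hI h)), filter_insert, if_pos (h i (hI hi)),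
    card_insert_of_notMem fun h' => hs (mem_sdiff.1 (mem_of_mem_filter s h')).1]

lemma ellJ_insert_insert_of_forall_lt_s10 (hs : s ∉ T) (h : ∀ t ∈ T, s < t) (hI : I ⊆ T) :
    ellJ (insert s T) (insert s I) = ellJ T I := by
  rw [ellJ, sum_insert fun h => hs (hI h), insert_sdiff_insert, sdiff_insert_of_notMem hs,
    filter_false_of_mem fun t ht => (h t (mem_sdiff.1 ht).1).not_gt, card_empty, zero_add]
  rfl

lemma ellJ_insert_of_forall_gt (hs : s ∉ T) (h : ∀ t ∈ T, t < s) (hI : I ⊆ T) :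
    ellJ (insert s T) I = ellJ T I := by
  refine sum_congr rfl fun i hi => ?_
  rw [insert_sdiff_of_notMem _ (fun h => hs (hI h)), filter_insert, if_neg (h i (hI hi)).not_gt]

lemma ellJ_insert_insert_of_forall_gt (hs : s ∉ T) (h : ∀ t ∈ T, t < s) (hI : I ⊆ T) :
    ellJ (insert s T) (insert s I) = ellJ T I + #(T \ I) := by
  rw [ellJ, sum_insert fun h => hs (hI h), insert_sdiff_insert, sdiff_insert_of_notMem hs,
    filter_true_of_mem fun t ht => h t (mem_sdiff.1 ht).1, add_comm]
  rfl

lemma signedMon_insert_of_forall_lt (hs : s ∉ T) (h : ∀ t ∈ T, s < t) (hI : I ⊆ T) :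
    signedMon R (insert s T) I = (-1 : R) ^ #I • (FreeAlgebra.ι R s * signedMon R T I) := by
  rw [signedMon, signedMon, ellJ_insert_of_forall_lt_s10 hs h hI,
    insert_sdiff_of_notMem _ (fun h => hs (hI h)),
    tMon_insert_of_forall_lt_s10 (fun h' => hs (mem_sdiff.1 h').1) fun t ht => h t (mem_sdiff.1 ht).1,
    mul_smul_comm, smul_smul, pow_add, mul_comm]

lemma signedMon_insert_insert_of_forall_lt (hs : s ∉ T) (h : ∀ t ∈ T, s < t) (hI : I ⊆ T) :
    signedMon R (insert s T) (insert s I) = signedMon R T I := by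
  rw [signedMon, signedMon, ellJ_insert_insert_of_forall_lt_s10 hs h hI, insert_sdiff_insert,
    sdiff_insert_of_notMem hs]

lemma signedMon_insert_of_forall_gt (hs : s ∉ T) (h : ∀ t ∈ T, t < s) (hI : I ⊆ T) :
    signedMon R (insert s T) I = signedMon R T I * FreeAlgebra.ι R s := by
  rw [signedMon, signedMon, ellJ_insert_of_forall_gt hs h hI,
    insert_sdiff_of_notMem _ (fun h => hs (hI h)),
    tMon_insert_of_forall_gt (fun h' => hs (mem_sdiff.1 h').1) fun t ht => h t (mem_sdiff.1 ht).1,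
    smul_mul_assoc]

lemma signedMon_insert_insert_of_forall_gt (hs : s ∉ T) (h : ∀ t ∈ T, t < s) (hI : I ⊆ T) :
    signedMon R (insert s T) (insert s I) = (-1 : R) ^ #(T \ I) • signedMon R T I := by
  rw [signedMon, signedMon, ellJ_insert_insert_of_forall_gt hs h hI, insert_sdiff_insert,
    sdiff_insert_of_notMem hs, smul_smul, pow_add, mul_comm]

end insertion

section recursion

variable (q : R) {s : S} {T : Finset S}

lemma tauMinus_insert_of_forall_lt_s10 (hs : s ∉ T) (h : ∀ t ∈ T, s < t) :
    tauMinus R q (insert s T) = tauPlus R q T - FreeAlgebra.ι R s * tauMinus R q T := by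
  rw [tauMinus_eq_sum_signedMon, sum_powerset_insert_odd hs, tauPlus_eq_sum_signedMon,
    tauMinus_eq_sum_signedMon, mul_sum, sub_eq_neg_add, ← sum_neg_distrib]
  congr 1 <;> refine sum_congr rfl fun I hI => ?_ <;>
    obtain ⟨hIT, hpar⟩ := mem_filter.1 hI <;> rw [mem_powerset] at hIT
  · rw [signedMon_insert_of_forall_lt hs h hIT, Odd.neg_one_pow (by rw [Nat.odd_iff]; omega),
      neg_one_smul, smul_neg, mul_smul_comm]
  · rw [signedMon_insert_insert_of_forall_lt hs h hIT, card_insert_of_notMem fun h => hs (hIT h),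
      Nat.add_sub_cancel]

lemma tauPlus_insert_of_forall_lt_s10 (hs : s ∉ T) (h : ∀ t ∈ T, s < t) :
    tauPlus R q (insert s T) = FreeAlgebra.ι R s * tauPlus R q T - q • tauMinus R q T := by
  rw [tauPlus_eq_sum_signedMon, sum_powerset_insert_even hs, tauPlus_eq_sum_signedMon,
    tauMinus_eq_sum_signedMon, mul_sum, smul_sum, sub_eq_add_neg, ← sum_neg_distrib]
  congr 1 <;> refine sum_congr rfl fun I hI => ?_ <;>
    obtain ⟨hIT, hpar⟩ := mem_filter.1 hI <;> rw [mem_powerset] at hIT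
  · rw [signedMon_insert_of_forall_lt hs h hIT, Even.neg_one_pow (even_iff_two_dvd.2 hpar),
      one_smul, mul_smul_comm]
  · rw [signedMon_insert_insert_of_forall_lt hs h hIT, card_insert_of_notMem fun h => hs (hIT h),
      show (#I + 1) / 2 = (#I - 1) / 2 + 1 by omega, pow_succ, smul_smul, ← neg_smul]
    congr 1
    ring

lemma tauMinus_insert_of_forall_gt (hs : s ∉ T) (h : ∀ t ∈ T, t < s) :
    tauMinus R q (insert s T) = tauMinus R q T * FreeAlgebra.ι R s
      + (-1 : R) ^ #T • tauPlus R q T := by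
  rw [tauMinus_eq_sum_signedMon, sum_powerset_insert_odd hs, tauPlus_eq_sum_signedMon,
    tauMinus_eq_sum_signedMon, sum_mul, smul_sum]
  congr 1 <;> refine sum_congr rfl fun I hI => ?_ <;>
    obtain ⟨hIT, hpar⟩ := mem_filter.1 hI <;> rw [mem_powerset] at hIT
  · rw [signedMon_insert_of_forall_gt hs h hIT, smul_mul_assoc]
  · have hsign : (-1 : R) ^ #(T \ I) = (-1) ^ #T := by
      rw [← card_sdiff_add_card_eq_card hIT, pow_add, Even.neg_one_pow (even_iff_two_dvd.2 hpar),
        mul_one]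
    rw [signedMon_insert_insert_of_forall_gt hs h hIT, card_insert_of_notMem fun h => hs (hIT h),
      Nat.add_sub_cancel, hsign, smul_comm]

lemma tauPlus_insert_eq_mul_tauMinus_insert (hs : s ∉ T) (h : ∀ t ∈ T, s < t) :
    tauPlus R q (insert s T) = FreeAlgebra.ι R s * tauMinus R q (insert s T)
      + (FreeAlgebra.ι R s ^ 2 - algebraMap R _ q) * tauMinus R q T := by
  rw [tauPlus_insert_of_forall_lt_s10 q hs h, tauMinus_insert_of_forall_lt_s10 q hs h, Algebra.smul_def]
  noncomm_ring

lemma tauMinus_insert_insert_eq {j : S} (hj : j < s) (hs : s ∉ T) (h : ∀ t ∈ T, s < t) :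
    tauMinus R q (insert s (insert j T)) =
      (FreeAlgebra.ι R s - FreeAlgebra.ι R j) * tauMinus R q (insert j T)
      + ((FreeAlgebra.ι R s * FreeAlgebra.ι R j + FreeAlgebra.ι R j * FreeAlgebra.ι R s
          - 2 * algebraMap R _ q) - (FreeAlgebra.ι R j ^ 2 - algebraMap R _ q))
        * tauMinus R q T := by
  have hjT : ∀ t ∈ insert s T, j < t := by
    simpa [hj] using fun t ht => hj.trans (h t ht)
  rw [insert_comm, tauMinus_insert_of_forall_lt_s10 q (fun h' => (hjT j h').false) hjT,
    tauPlus_insert_of_forall_lt_s10 q hs h, tauMinus_insert_of_forall_lt_s10 q hs h,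
    tauMinus_insert_of_forall_lt_s10 q (fun h' => (hjT j (mem_insert_of_mem h')).false)
      fun t ht => hjT t (mem_insert_of_mem ht), Algebra.smul_def]
  noncomm_ring

end recursion

section ideal

variable (q : R) (M : Set (Finset S))

lemma sq_sub_mem_Iq (j : S) : FreeAlgebra.ι R j ^ 2 - algebraMap R _ q ∈ Iq R q M :=
  TwoSidedIdeal.subset_span (Or.inl (Or.inl ⟨j, rfl⟩))

lemma anticomm_sub_mem_Iq {r s : S} (h : s < r) :
    FreeAlgebra.ι R r * FreeAlgebra.ι R s + FreeAlgebra.ι R s * FreeAlgebra.ι R r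
      - 2 * algebraMap R _ q ∈ Iq R q M :=
  TwoSidedIdeal.subset_span (Or.inl (Or.inr ⟨r, s, h, rfl⟩))

lemma tauPlus_mem_Iq {J : Finset S} (hJ : J.Nonempty) (h : tauMinus R q J ∈ Iq R q M) :
    tauPlus R q J ∈ Iq R q M := by
  set j := J.min' hJ
  have hJ_eq : insert j (J.erase j) = J := insert_erase (min'_mem J hJ)
  rw [← hJ_eq] at h ⊢
  rw [tauPlus_insert_eq_mul_tauMinus_insert q (notMem_erase j J) fun t => min'_lt_of_mem_erase_min' J hJ]
  exact add_mem ((Iq R q M).mul_mem_left _ _ h) ((Iq R q M).mul_mem_right _ _ (sq_sub_mem_Iq q M j))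

end ideal

end development

theorem stmt10_general {S : Type*} [LinearOrder S] {R : Type*} [CommRing R] (q : R)
    (M : Set (Finset S)) (J : Finset S) (hJ : J.Nonempty)
    (h : tauMinus R q J ∈ Iq R q M) (s : S)
    (hcase : (∀ r ∈ J, r < s) ∨
      (2 ≤ J.card ∧ ∀ j ∈ J.erase (J.min' hJ), s < j)) :
    tauMinus R q (insert s J) ∈ Iq R q M := by
  by_cases hsJ : s ∈ J
  · rwa [insert_eq_of_mem hsJ]
  have hplus := tauPlus_mem_Iq q M hJ h
  rcases hcase with hmax | ⟨-, hlt⟩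
  · rw [tauMinus_insert_of_forall_gt q hsJ hmax, Algebra.smul_def]
    exact add_mem ((Iq R q M).mul_mem_right _ _ h) ((Iq R q M).mul_mem_left _ _ hplus)
  set j := J.min' hJ
  rcases lt_or_gt_of_ne (show s ≠ j from fun hsj => hsJ (hsj ▸ min'_mem J hJ)) with hsj | hjs
  · rw [tauMinus_insert_of_forall_lt_s10 q hsJ fun t ht => hsj.trans_le (min'_le J t ht)]
    exact sub_mem hplus ((Iq R q M).mul_mem_left _ _ h)
  · have hJ_eq : insert j (J.erase j) = J := insert_erase (min'_mem J hJ)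
    rw [← hJ_eq] at h ⊢
    rw [tauMinus_insert_insert_eq q hjs (fun h' => hsJ (mem_of_mem_erase h')) hlt]
    exact add_mem ((Iq R q M).mul_mem_left _ _ h) ((Iq R q M).mul_mem_right _ _
      (sub_mem (anticomm_sub_mem_Iq q M hjs) (sq_sub_mem_Iq q M j)))

theorem stmt10 {S : Type*} [Fintype S] [LinearOrder S] {R : Type*} [CommRing R] (q : R)
    (M : Set (Finset S)) (J : Finset S) (hJ : J.Nonempty)
    (h : tauMinus R q J ∈ Iq R q M) (s : S)
    (hcase : (∀ r ∈ J, r < s) ∨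
      (2 ≤ J.card ∧ ∀ j ∈ J.erase (J.min' hJ), s < j)) :
    tauMinus R q (insert s J) ∈ Iq R q M :=
  stmt10_general q M J hJ h s hcase
end

section
/- Let M be a matroid on ground set S and let J, K ⊆ S be dependent sets such that J ∩ K is independent. Then for every l ∈ J ∪ K, the set (J ∪ K) ∖ {l} is dependent. -/
theorem stmt11_general {S : Type*} (M : Matroid S)
    (J K : Set S) (hJ : M.Dep J) (hK : M.Dep K) (hJK : M.Indep (J ∩ K)) :
    ∀ l ∈ J ∪ K, M.Dep ((J ∪ K) \ {l}) := by
  intro l _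
  obtain ⟨C, hCJ, hC⟩ := hJ.exists_isCircuit_subset
  obtain ⟨D, hDK, hD⟩ := hK.exists_isCircuit_subset
  have hCD : C ≠ D := by
    rintro rfl
    exact hC.dep.not_indep (hJK.subset (Set.subset_inter hCJ hDK))
  obtain ⟨C', hC'CD, hC'⟩ := hC.elimination hD hCD l
  have hC'JK : C' ⊆ (J ∪ K) \ {l} :=
    hC'CD.trans (Set.sdiff_subset_sdiff_left (Set.union_subset_union hCJ hDK))
  have hJKE : (J ∪ K) \ {l} ⊆ M.E :=
    Set.sdiff_subset.trans (Set.union_subset hJ.subset_ground hK.subset_ground)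
  exact hC'.dep.superset hC'JK hJKE

theorem stmt11 {S : Type*} (M : Matroid S) (hE : M.E = Set.univ)
    (J K : Set S) (hJ : M.Dep J) (hK : M.Dep K) (hJK : M.Indep (J ∩ K)) :
    ∀ l ∈ J ∪ K, M.Dep ((J ∪ K) \ {l}) :=
  stmt11_general M J K hJ hK hJK
end
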